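/- Let ε > 0, δ ∈ (0,1), GS > 0, τ > 0, and let qD, qDs be real numbers. Let ν be distributed as Lap(GS/ε). Then: (i) if τ ≥ (GS/ε)·ln(1/δ) and qD = qDs, then Pr[|qD + ν − qDs| < τ] ≥ 1 − δ; (ii) if τ ≥ (GS/ε)·ln(1/(2δ)) and |qD − qDs| ≥ 2τ, then Pr[|qD + ν − qDs| ≥ τ] ≥ 1 − δ. Consequently the Laplace-mechanism per-query decider LM_sum for sum queries with global sensitivity bound GS satisfies both effectiveness conditions at δ for every τ ≥ (GS/ε)·ln(1/δ). -/

import Mathlib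

open MeasureTheory Real

/-- `Lap b` : the Laplace distribution on `ℝ` with density
`x ↦ (1/(2b)) * exp (-|x|/b)` with respect to Lebesgue measure. -/
noncomputable def laplace (b : ℝ) : Measure ℝ :=
  volume.withDensity (fun x => ENNReal.ofReal ((1 / (2 * b)) * Real.exp (-|x| / b)))

/-! The Laplace law is symmetric with tails `Pr[ν ≥ a] = Pr[ν ≤ -a] = exp (-a/b) / 2` for `a ≥ 0`.
If `qD = qDs`, the decider rejects only on the union of the two tails beyond `τ`, of mass
`exp (-τ/b) ≤ δ`. If `|qD - qDs| ≥ 2τ`, the acceptance window lies inside a single tail beyond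
`τ`, of mass `exp (-τ/b) / 2 ≤ δ` already under `τ ≥ b ln (1/(2δ))`, which is weaker than
`τ ≥ b ln (1/δ)`. -/

open Set

lemma ofReal_one_sub_le_of_measure_compl_le {α : Type*} [MeasurableSpace α] {μ : Measure α}
    [IsProbabilityMeasure μ] {s : Set α} {δ : ℝ} (hs : MeasurableSet s) (hδ : 0 ≤ δ)
    (h : μ sᶜ ≤ ENNReal.ofReal δ) : ENNReal.ofReal (1 - δ) ≤ μ s := by
  rw [← compl_compl s, prob_compl_eq_one_sub hs.compl, ENNReal.ofReal_sub 1 hδ,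
    ENNReal.ofReal_one]
  exact tsub_le_tsub_left h 1

lemma exp_neg_div_le_of_mul_log_one_div_le {b d τ : ℝ} (hb : 0 < b) (hd : 0 < d)
    (h : b * log (1 / d) ≤ τ) : exp (-τ / b) ≤ d :=
  calc exp (-τ / b) ≤ exp (-log (1 / d)) :=
        exp_le_exp.2 <| by rw [neg_div, neg_le_neg_iff, le_div_iff₀ hb]; linarith
    _ = d := by rw [one_div, log_inv, neg_neg, exp_log hd]

lemma laplace_neg (b : ℝ) (s : Set ℝ) : laplace b (-s) = laplace b s := by
  have := (Measure.measurePreserving_neg volume).setLIntegral_comp_preimage_emb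
    (Homeomorph.neg ℝ).measurableEmbedding
    (fun x => ENNReal.ofReal ((1 / (2 * b)) * exp (-|x| / b))) s
  simp only [abs_neg] at this
  rw [laplace, withDensity_apply' _ s, withDensity_apply' _ (-s), ← this]
  rfl

section
variable {b : ℝ}

lemma laplace_Ici (hb : 0 < b) {a : ℝ} (ha : 0 ≤ a) :
    laplace b (Ici a) = ENNReal.ofReal (exp (-a / b) / 2) := by
  have hrate : -b⁻¹ < 0 := by simpa using hb
  have hint : IntegrableOn (fun x => 1 / (2 * b) * exp (-b⁻¹ * x)) (Ioi a) :=
    (integrableOn_exp_mul_Ioi hrate a).const_mul _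
  have hdens : ∀ x ∈ Ioi a, ENNReal.ofReal (1 / (2 * b) * exp (-|x| / b)) =
      ENNReal.ofReal (1 / (2 * b) * exp (-b⁻¹ * x)) := fun x (hx : a < x) => by
    rw [abs_of_pos (ha.trans_lt hx)]; ring_nf
  rw [laplace, withDensity_apply _ measurableSet_Ici, setLIntegral_congr Ioi_ae_eq_Ici.symm,
    setLIntegral_congr_fun measurableSet_Ioi hdens,
    ← ofReal_integral_eq_lintegral_ofReal hint (ae_of_all _ fun x => by positivity),
    integral_const_mul, integral_exp_mul_Ioi hrate]
  congr 1
  field_simp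

lemma laplace_Iic_neg (hb : 0 < b) {a : ℝ} (ha : 0 ≤ a) :
    laplace b (Iic (-a)) = ENNReal.ofReal (exp (-a / b) / 2) := by
  rw [← neg_Ici, laplace_neg, laplace_Ici hb ha]

lemma isProbabilityMeasure_laplace (hb : 0 < b) : IsProbabilityMeasure (laplace b) := by
  have hzero : laplace b {0} = 0 := withDensity_absolutelyContinuous _ _ (measure_singleton 0)
  constructor
  rw [← Iio_union_Ici (a := (0 : ℝ)), measure_union (Iio_disjoint_Ici le_rfl) measurableSet_Ici,
    measure_congr (Iio_ae_eq_Iic' hzero), ← neg_zero, laplace_Iic_neg hb le_rfl, neg_zero,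
    laplace_Ici hb le_rfl, ← ENNReal.ofReal_add (by positivity) (by positivity)]
  norm_num

lemma laplace_le_abs_le (hb : 0 < b) {τ : ℝ} (hτ : 0 ≤ τ) :
    laplace b {x | τ ≤ |x|} ≤ ENNReal.ofReal (exp (-τ / b)) := by
  have htails : {x : ℝ | τ ≤ |x|} = Iic (-τ) ∪ Ici τ := by
    ext x
    exact (le_abs' : τ ≤ |x| ↔ _)
  calc laplace b {x | τ ≤ |x|} ≤ laplace b (Iic (-τ)) + laplace b (Ici τ) :=
        htails ▸ measure_union_le _ _
    _ = ENNReal.ofReal (exp (-τ / b)) := by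
        rw [laplace_Iic_neg hb hτ, laplace_Ici hb hτ,
          ← ENNReal.ofReal_add (by positivity) (by positivity), add_halves]

lemma laplace_abs_add_lt_le (hb : 0 < b) {τ c : ℝ} (hτ : 0 ≤ τ) (hc : 2 * τ ≤ |c|) :
    laplace b {x | |c + x| < τ} ≤ ENNReal.ofReal (exp (-τ / b) / 2) := by
  rcases le_abs.1 hc with hc | hc
  · rw [← laplace_Iic_neg hb hτ]
    exact measure_mono fun x (hx : |c + x| < τ) => show x ≤ -τ by linarith [abs_lt.1 hx]
  · rw [← laplace_Ici hb hτ]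
    exact measure_mono fun x (hx : |c + x| < τ) => show τ ≤ x by linarith [abs_lt.1 hx]

lemma ofReal_one_sub_le_laplace_abs_lt (hb : 0 < b) {δ τ : ℝ} (hδ : 0 < δ) (hτ : 0 ≤ τ)
    (h : b * log (1 / δ) ≤ τ) : ENNReal.ofReal (1 - δ) ≤ laplace b {x | |x| < τ} := by
  have := isProbabilityMeasure_laplace hb
  refine ofReal_one_sub_le_of_measure_compl_le (measurableSet_lt (by fun_prop) (by fun_prop))
    hδ.le ?_
  simp only [compl_ofPred, not_lt]
  exact (laplace_le_abs_le hb hτ).trans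
    (ENNReal.ofReal_le_ofReal (exp_neg_div_le_of_mul_log_one_div_le hb hδ h))

lemma ofReal_one_sub_le_laplace_le_abs_add (hb : 0 < b) {δ τ c : ℝ} (hδ : 0 < δ) (hτ : 0 ≤ τ)
    (h : b * log (1 / (2 * δ)) ≤ τ) (hc : 2 * τ ≤ |c|) :
    ENNReal.ofReal (1 - δ) ≤ laplace b {x | τ ≤ |c + x|} := by
  have := isProbabilityMeasure_laplace hb
  refine ofReal_one_sub_le_of_measure_compl_le (measurableSet_le (by fun_prop) (by fun_prop))
    hδ.le ?_
  have hexp := exp_neg_div_le_of_mul_log_one_div_le hb (by positivity) h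
  simp only [compl_ofPred, not_le]
  exact (laplace_abs_add_lt_le hb hτ hc).trans (ENNReal.ofReal_le_ofReal (by linarith))

end

theorem lapsum_effectiveness_general (ε δ GS τ qD qDs : ℝ) (hε : 0 < ε)
    (hδ0 : 0 < δ) (hGS : 0 < GS) (hτ : 0 < τ) :
    (τ ≥ (GS / ε) * Real.log (1 / δ) → qD = qDs →
      laplace (GS / ε) {x : ℝ | |qD + x - qDs| < τ} ≥ ENNReal.ofReal (1 - δ)) ∧
    (τ ≥ (GS / ε) * Real.log (1 / (2 * δ)) → |qD - qDs| ≥ 2 * τ →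
      laplace (GS / ε) {x : ℝ | τ ≤ |qD + x - qDs|} ≥ ENNReal.ofReal (1 - δ)) ∧
    (τ ≥ (GS / ε) * Real.log (1 / δ) →
      ((qD = qDs →
          laplace (GS / ε) {x : ℝ | qD + x ∈ Set.Ioo (qDs - τ) (qDs + τ)} ≥
            ENNReal.ofReal (1 - δ)) ∧
       (qD ∉ Set.Ioo (qDs - 2 * τ) (qDs + 2 * τ) →
          laplace (GS / ε) {x : ℝ | qD + x ∉ Set.Ioo (qDs - τ) (qDs + τ)} ≥
            ENNReal.ofReal (1 - δ)))) := by
  have hb : 0 < GS / ε := div_pos hGS hε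
  have hIoo : ∀ y r : ℝ, y ∈ Ioo (qDs - r) (qDs + r) ↔ |y - qDs| < r := fun y r => by
    rw [← Real.ball_eq_Ioo, Metric.mem_ball, Real.dist_eq]
  have accept : τ ≥ (GS / ε) * log (1 / δ) → qD = qDs →
      laplace (GS / ε) {x : ℝ | |qD + x - qDs| < τ} ≥ ENNReal.ofReal (1 - δ) := by
    rintro h rfl
    simpa only [add_sub_cancel_left] using ofReal_one_sub_le_laplace_abs_lt hb hδ0 hτ.le h
  have reject : τ ≥ (GS / ε) * log (1 / (2 * δ)) → |qD - qDs| ≥ 2 * τ →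
      laplace (GS / ε) {x : ℝ | τ ≤ |qD + x - qDs|} ≥ ENNReal.ofReal (1 - δ) := fun h hq => by
    simpa only [add_sub_right_comm] using ofReal_one_sub_le_laplace_le_abs_add hb hδ0 hτ.le h hq
  have hlog : (GS / ε) * log (1 / (2 * δ)) ≤ (GS / ε) * log (1 / δ) :=
    mul_le_mul_of_nonneg_left (log_le_log (by positivity)
      (one_div_le_one_div_of_le hδ0 (by linarith))) hb.le
  refine ⟨accept, reject, fun h => ⟨?_, fun hq => ?_⟩⟩
  · simpa only [hIoo] using accept h
  · simp only [hIoo, not_lt] at hq ⊢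
    exact reject (hlog.trans h) hq

/-- Effectiveness of the Laplace-mechanism per-query decider `LM_sum` for sum queries
with global sensitivity bound `GS`.  With `ν ~ Lap(GS/ε)`:
(i) if `τ ≥ (GS/ε)·ln(1/δ)` and `qD = qDs` then `Pr[|qD + ν − qDs| < τ] ≥ 1 − δ`;
(ii) if `τ ≥ (GS/ε)·ln(1/(2δ))` and `|qD − qDs| ≥ 2τ` then
`Pr[|qD + ν − qDs| ≥ τ] ≥ 1 − δ`; consequently `LM_sum` (which outputs 1 exactly when
`qD + ν ∈ (qDs − τ, qDs + τ)`) satisfies both effectiveness conditions at `δ` for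
every `τ ≥ (GS/ε)·ln(1/δ)`. -/
theorem lapsum_effectiveness (ε δ GS τ qD qDs : ℝ) (hε : 0 < ε)
    (hδ0 : 0 < δ) (hδ1 : δ < 1) (hGS : 0 < GS) (hτ : 0 < τ) :
    (τ ≥ (GS / ε) * Real.log (1 / δ) → qD = qDs →
      laplace (GS / ε) {x : ℝ | |qD + x - qDs| < τ} ≥ ENNReal.ofReal (1 - δ)) ∧
    (τ ≥ (GS / ε) * Real.log (1 / (2 * δ)) → |qD - qDs| ≥ 2 * τ →
      laplace (GS / ε) {x : ℝ | τ ≤ |qD + x - qDs|} ≥ ENNReal.ofReal (1 - δ)) ∧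
    (τ ≥ (GS / ε) * Real.log (1 / δ) →
      ((qD = qDs →
          laplace (GS / ε) {x : ℝ | qD + x ∈ Set.Ioo (qDs - τ) (qDs + τ)} ≥
            ENNReal.ofReal (1 - δ)) ∧
       (qD ∉ Set.Ioo (qDs - 2 * τ) (qDs + 2 * τ) →
          laplace (GS / ε) {x : ℝ | qD + x ∉ Set.Ioo (qDs - τ) (qDs + τ)} ≥
            ENNReal.ofReal (1 - δ)))) :=
  lapsum_effectiveness_general ε δ GS τ qD qDs hε hδ0 hGS hτ
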